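/- (Theorem 2, part 3) Let {ρ_i = U_iφφ*U_i*, 1 ≤ i ≤ m} be a geometrically uniform state set of density matrices with uniform priors p_i = 1/m, and assume W = Σ_i U_iφφ*U_i* is positive definite. If φ*W^{-1/2}φ = α·I_k for some real constant α, then the least-squares measurement {Σ_i = μ_iμ_i*, μ_i = (1/√m)W'^{-1/2}U_iφ with W' = (1/m)W}—equivalently the POVM with operators U_i(μμ*)U_i* where μ = W^{-1/2}φ—minimizes the probability of a detection error: for every POVM {Π_i}, Σ_i (1/m) tr(ρ_iΠ_i) ≤ Σ_i (1/m) tr(ρ_iΣ_i). -/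

import Mathlib

open Matrix
open scoped ComplexOrder

namespace Matrix.PosSemidef

/-- The positive semidefinite square root of a positive semidefinite matrix
(the definition of Mathlib of December 2024, removed since). -/
noncomputable def sqrt {n 𝕜 : Type*} [Fintype n] [DecidableEq n] [RCLike 𝕜]
    {A : Matrix n n 𝕜} (hA : PosSemidef A) : Matrix n n 𝕜 :=
  hA.1.eigenvectorUnitary.1 * diagonal ((↑) ∘ (√·) ∘ hA.1.eigenvalues) *
  (star hA.1.eigenvectorUnitary : Matrix n n 𝕜)

open scoped MatrixOrder in
lemma sqrt_eq_cfcSqrt {n 𝕜 : Type*} [Fintype n] [DecidableEq n] [RCLike 𝕜]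
    {A : Matrix n n 𝕜} (hA : PosSemidef A) : hA.sqrt = CFC.sqrt A := by
  rw [CFC.sqrt_eq_cfc, cfc_nnreal_eq_real _ A, hA.1.cfc_eq]
  simp only [IsHermitian.cfc, sqrt, Unitary.conjStarAlgAut_apply, Real.coe_sqrt, Real.coe_toNNReal']
  congr 3
  funext i
  simp [max_eq_left (hA.eigenvalues_nonneg i)]

open scoped MatrixOrder in
lemma posSemidef_sqrt {n 𝕜 : Type*} [Fintype n] [DecidableEq n] [RCLike 𝕜]
    {A : Matrix n n 𝕜} (hA : PosSemidef A) : PosSemidef hA.sqrt := by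
  rw [sqrt_eq_cfcSqrt]; exact (CFC.sqrt_nonneg A).posSemidef

open scoped MatrixOrder in
lemma sqrt_mul_self {n 𝕜 : Type*} [Fintype n] [DecidableEq n] [RCLike 𝕜]
    {A : Matrix n n 𝕜} (hA : PosSemidef A) : hA.sqrt * hA.sqrt = A := by
  rw [sqrt_eq_cfcSqrt]; exact CFC.sqrt_mul_sqrt_self A hA.nonneg

open scoped MatrixOrder in
lemma eq_sqrt_of_sq_eq {n 𝕜 : Type*} [Fintype n] [DecidableEq n] [RCLike 𝕜]
    {A B : Matrix n n 𝕜} (hA : PosSemidef A) (hB : PosSemidef B) (h : A ^ 2 = B) :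
    A = hB.sqrt := by
  rw [sqrt_eq_cfcSqrt]; exact (CFC.sqrt_unique (by rw [← sq]; exact h) hA.nonneg).symm

end Matrix.PosSemidef

open scoped MatrixOrder in
lemma Matrix.posSemidef_iff_eq_transpose_mul_self {n : ℕ} {A : Matrix (Fin n) (Fin n) ℂ} :
    A.PosSemidef ↔ ∃ B : Matrix (Fin n) (Fin n) ℂ, A = Bᴴ * B := by
  constructor
  · intro hA
    obtain ⟨y, hy⟩ := CStarAlgebra.nonneg_iff_eq_star_mul_self.mp hA.nonneg
    exact ⟨y, by simpa [Matrix.star_eq_conjTranspose] using hy⟩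
  · rintro ⟨B, rfl⟩; exact Matrix.posSemidef_conjTranspose_mul_self B

lemma aux_entry_nonneg {n : ℕ} {M : Matrix (Fin n) (Fin n) ℂ} (hM : M.PosSemidef) (i : Fin n) :
    0 ≤ M i i := by
  exact hM.diag_nonneg

lemma aux_trace_re_nonneg {n : ℕ} {M : Matrix (Fin n) (Fin n) ℂ} (hM : M.PosSemidef) :
    0 ≤ M.trace.re := by
  rw [Matrix.trace, Complex.re_sum]
  exact Finset.sum_nonneg fun i _ => (Complex.nonneg_iff.mp (aux_entry_nonneg hM i)).1

lemma aux_trace_mul_re_nonneg {n : ℕ} {A B : Matrix (Fin n) (Fin n) ℂ}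
    (hA : A.PosSemidef) (hB : B.PosSemidef) : 0 ≤ ((A * B).trace).re := by
  obtain ⟨C, rfl⟩ := Matrix.posSemidef_iff_eq_transpose_mul_self.mp hA
  rw [Matrix.mul_assoc, Matrix.trace_mul_comm]
  exact aux_trace_re_nonneg (by simpa [Matrix.mul_assoc] using hB.mul_mul_conjTranspose_same C)

lemma aux_posDef_of_det {n : ℕ} {A : Matrix (Fin n) (Fin n) ℂ}
    (hA : A.PosSemidef) (h : IsUnit A.det) : A.PosDef := by
  obtain ⟨C, hC⟩ := Matrix.posSemidef_iff_eq_transpose_mul_self.mp hA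
  refine .of_dotProduct_mulVec_pos hA.1 fun x hx => ?_
  have hinj : Function.Injective (A.mulVec) :=
    Matrix.mulVec_injective_iff_isUnit.mpr ((Matrix.isUnit_iff_isUnit_det A).mpr h)
  have hAx : A *ᵥ x ≠ 0 := by
    intro h0; exact hx (hinj (by simpa using h0))
  have hCx : C *ᵥ x ≠ 0 := by
    intro h0; apply hAx
    rw [hC, ← Matrix.mulVec_mulVec, h0, Matrix.mulVec_zero]
  have key : star x ⬝ᵥ A *ᵥ x = star (C *ᵥ x) ⬝ᵥ (C *ᵥ x) := by
    rw [hC, ← Matrix.mulVec_mulVec, dotProduct_mulVec, star_mulVec]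
  rw [key]
  have h1 : 0 ≤ star (C *ᵥ x) ⬝ᵥ (C *ᵥ x) := dotProduct_star_self_nonneg _
  have h2 : star (C *ᵥ x) ⬝ᵥ (C *ᵥ x) ≠ 0 := fun hz =>
    hCx (dotProduct_star_self_eq_zero.mp hz)
  exact lt_of_le_of_ne h1 (Ne.symm h2)

/-- Theorem 2, part 3: for a geometrically uniform state set
`ρ_i = U_i φ φ* U_i*` of density matrices with uniform priors `1/m` and `W = ∑_i U_i φ φ* U_i*`
positive definite, if `φ* W^{-1/2} φ = α I_k` for some real constant `α`, then the
least-squares measurement, i.e. the POVM with operators `U_i (μ μ*) U_i*` where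
`μ = W^{-1/2} φ`, minimizes the probability of a detection error. -/
theorem gu_lsm_optimal (n m k : ℕ) [NeZero m]
    (U : Fin m → Matrix (Fin n) (Fin n) ℂ)
    (hUunit : ∀ i, U i ∈ Matrix.unitaryGroup (Fin n) ℂ)
    (hUinj : Function.Injective U)
    (hUone : U 0 = 1)
    (hUmul : ∀ i j, ∃ t, U i * U j = U t)
    (hUinv : ∀ i, ∃ j, (U i)ᴴ = U j)
    (φ : Matrix (Fin n) (Fin k) ℂ)
    (hφtr : (φ * φᴴ).trace = 1)
    (ρ : Fin m → Matrix (Fin n) (Fin n) ℂ)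
    (hρdef : ∀ i, ρ i = U i * (φ * φᴴ) * (U i)ᴴ)
    (W : Matrix (Fin n) (Fin n) ℂ)
    (hWdef : W = ∑ i, U i * (φ * φᴴ) * (U i)ᴴ) (hW : W.PosDef)
    (μ : Matrix (Fin n) (Fin k) ℂ)
    (hμ : μ = (hW.posSemidef.sqrt)⁻¹ * φ)
    (α : ℝ)
    (hα : φᴴ * (hW.posSemidef.sqrt)⁻¹ * φ = (α : ℂ) • 1) :
    ∀ Pm : Fin m → Matrix (Fin n) (Fin n) ℂ,
      (∀ i, (Pm i).PosSemidef) → (∑ i, Pm i = 1) →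
      ∑ i, (1 / (m : ℝ)) * ((ρ i * Pm i).trace).re ≤
        ∑ i, (1 / (m : ℝ)) * ((ρ i * (U i * (μ * μᴴ) * (U i)ᴴ)).trace).re := by
  set R : Matrix (Fin n) (Fin n) ℂ := hW.posSemidef.sqrt with hRdef
  have hRps : R.PosSemidef := hW.posSemidef.posSemidef_sqrt
  have hRsq : R * R = W := hW.posSemidef.sqrt_mul_self
  have hRdetu : IsUnit R.det := by
    have h1 : R.det * R.det = W.det := by rw [← Matrix.det_mul, hRsq]
    have h2 : W.det ≠ 0 := hW.det_pos.ne'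
    exact (mul_ne_zero_iff.mp (h1 ▸ h2)).1.isUnit
  -- unitary facts
  have hU1 : ∀ i, (U i)ᴴ * U i = 1 := fun i => by
    have := (hUunit i).1
    simpa [Matrix.star_eq_conjTranspose] using this
  have hU2 : ∀ i, U i * (U i)ᴴ = 1 := fun i => by
    have := (hUunit i).2
    simpa [Matrix.star_eq_conjTranspose] using this
  -- U i commutes with W
  have hUW : ∀ i, U i * W * (U i)ᴴ = W := by
    intro i
    have he : ∀ j, U i * U j = U ((hUmul i j).choose) := fun j => (hUmul i j).choose_spec
    have einj : Function.Injective (fun j => (hUmul i j).choose) := by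
      intro a b hab
      have hab' : (hUmul i a).choose = (hUmul i b).choose := hab
      have : U i * U a = U i * U b := by rw [he a, he b, hab']
      have h2 : U a = U b := by
        have := congrArg (fun X => (U i)ᴴ * X) this
        simpa [← Matrix.mul_assoc, hU1 i] using this
      exact hUinj h2
    have ebij := Finite.injective_iff_bijective.mp einj
    calc U i * W * (U i)ᴴ
        = ∑ j, U i * (U j * (φ * φᴴ) * (U j)ᴴ) * (U i)ᴴ := by
          rw [hWdef, Finset.mul_sum, Finset.sum_mul]
      _ = ∑ j, U ((hUmul i j).choose) * (φ * φᴴ) * (U ((hUmul i j).choose))ᴴ := by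
          refine Finset.sum_congr rfl fun j _ => ?_
          rw [← he j, Matrix.conjTranspose_mul]
          simp only [Matrix.mul_assoc]
      _ = ∑ t, U t * (φ * φᴴ) * (U t)ᴴ :=
          Fintype.sum_bijective _ ebij _ _ (fun j => rfl)
      _ = W := hWdef.symm
  have hUWc : ∀ i, U i * W = W * U i := by
    intro i
    have := congrArg (fun X => X * U i) (hUW i)
    simpa [Matrix.mul_assoc, hU1 i] using this
  -- U i commutes with R
  have hURU : ∀ i, U i * R * (U i)ᴴ = R := by
    intro i
    have h1 : (U i * R * (U i)ᴴ).PosSemidef := hRps.mul_mul_conjTranspose_same (U i)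
    have h2 : (U i * R * (U i)ᴴ) ^ 2 = W := by
      rw [pow_two]
      calc U i * R * (U i)ᴴ * (U i * R * (U i)ᴴ)
          = U i * (R * ((U i)ᴴ * U i) * R) * (U i)ᴴ := by simp only [Matrix.mul_assoc]
        _ = U i * W * (U i)ᴴ := by rw [hU1 i, Matrix.mul_one, hRsq]
        _ = W := hUW i
    exact h1.eq_sqrt_of_sq_eq hW.posSemidef h2
  have hUR : ∀ i, U i * R = R * U i := by
    intro i
    have := congrArg (fun X => X * U i) (hURU i)
    simpa [Matrix.mul_assoc, hU1 i] using this
  -- S = R⁻¹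
  set S : Matrix (Fin n) (Fin n) ℂ := R⁻¹ with hSdef
  have hRpd : R.PosDef := aux_posDef_of_det hRps hRdetu
  have hSpd : S.PosDef := hRpd.inv
  have hRS : R * S = 1 := Matrix.mul_nonsing_inv R hRdetu
  have hSR : S * R = 1 := Matrix.nonsing_inv_mul R hRdetu
  have hSH : Sᴴ = S := hSpd.isHermitian
  have hUS : ∀ i, U i * S = S * U i := by
    intro i
    have h1 : S * (U i * R) * S = S * (R * U i) * S := by rw [hUR i]
    have h2 : S * U i = U i * S := by
      calc S * U i = S * U i * (R * S) := by rw [hRS, Matrix.mul_one]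
        _ = S * (U i * R) * S := by simp only [Matrix.mul_assoc]
        _ = S * (R * U i) * S := h1
        _ = (S * R) * (U i * S) := by simp only [Matrix.mul_assoc]
        _ = U i * S := by rw [hSR, Matrix.one_mul]
    exact h2.symm
  have hSUc : ∀ i, S * (U i)ᴴ = (U i)ᴴ * S := by
    intro i
    have := congrArg Matrix.conjTranspose (hUS i)
    simpa [Matrix.conjTranspose_mul, hSH] using this
  -- k positive
  have hk : 0 < k := by
    rcases Nat.eq_zero_or_pos k with hk0 | hk0
    · subst hk0
      have : φ = 0 := Subsingleton.elim _ _
      rw [this] at hφtr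
      simp at hφtr
    · exact hk0
  -- T = sqrt S, ψ = T φ
  set T : Matrix (Fin n) (Fin n) ℂ := hSpd.posSemidef.sqrt with hTdef
  have hTps : T.PosSemidef := hSpd.posSemidef.posSemidef_sqrt
  have hTsq : T * T = S := hSpd.posSemidef.sqrt_mul_self
  have hTH : Tᴴ = T := hTps.isHermitian
  have hTdetu : IsUnit T.det := by
    have h1 : T.det * T.det = S.det := by rw [← Matrix.det_mul, hTsq]
    have h2 : S.det ≠ 0 := hSpd.det_pos.ne'
    exact (mul_ne_zero_iff.mp (h1 ▸ h2)).1.isUnit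
  have hTT : T * T⁻¹ = 1 := Matrix.mul_nonsing_inv T hTdetu
  have hTT' : T⁻¹ * T = 1 := Matrix.nonsing_inv_mul T hTdetu
  have hTinvH : (T⁻¹)ᴴ = T⁻¹ := by rw [Matrix.conjTranspose_nonsing_inv, hTH]
  set ψ : Matrix (Fin n) (Fin k) ℂ := T * φ with hψdef
  have hψ : ψᴴ * ψ = (α : ℂ) • 1 := by
    calc ψᴴ * ψ = φᴴ * (T * T) * φ := by
          rw [hψdef, Matrix.conjTranspose_mul, hTH]
          simp only [Matrix.mul_assoc]
      _ = (α : ℂ) • 1 := by rw [hTsq]; exact hα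
  -- positivity of α
  have hα0 : 0 ≤ α := by
    have h1 := aux_entry_nonneg (Matrix.posSemidef_conjTranspose_mul_self ψ) ⟨0, hk⟩
    rw [hψ] at h1
    simp only [Matrix.smul_apply, Matrix.one_apply_eq, smul_eq_mul, mul_one] at h1
    exact_mod_cast (Complex.nonneg_iff.mp h1).1
  have hαne : α ≠ 0 := by
    intro h0
    rw [h0] at hψ
    simp only [Complex.ofReal_zero, zero_smul] at hψ
    have hψ0 : ψ = 0 := Matrix.conjTranspose_mul_self_eq_zero.mp hψ
    have hφ0 : φ = 0 := by
      have : T⁻¹ * (T * φ) = T⁻¹ * (0 : Matrix (Fin n) (Fin k) ℂ) := by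
        rw [← hψdef, hψ0]
      rwa [← Matrix.mul_assoc, hTT', Matrix.one_mul, Matrix.mul_zero] at this
    rw [hφ0] at hφtr
    simp at hφtr
  have hαpos : 0 < α := lt_of_le_of_ne hα0 (Ne.symm hαne)
  set c : ℂ := (α : ℂ) with hcdef
  have hcne : c ≠ 0 := by
    rw [hcdef]
    exact_mod_cast hαne
  -- idempotent projection
  set A : Matrix (Fin n) (Fin n) ℂ := ψ * ψᴴ with hAdef
  have hA2 : A * A = c • A := by
    calc A * A = ψ * (ψᴴ * ψ) * ψᴴ := by simp only [hAdef, Matrix.mul_assoc]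
      _ = c • A := by
          rw [hψ, Matrix.mul_smul, Matrix.mul_one, Matrix.smul_mul]
  set P : Matrix (Fin n) (Fin n) ℂ := 1 - c⁻¹ • A with hPdef
  have hPP : P * P = P := by
    simp only [hPdef, Matrix.sub_mul, Matrix.mul_sub, Matrix.one_mul, Matrix.mul_one,
      Matrix.smul_mul, Matrix.mul_smul, hA2, smul_smul, inv_mul_cancel₀ hcne, mul_one,
      one_smul]
    abel_nf
    simp
  have hPH : Pᴴ = P := by
    rw [hPdef, Matrix.conjTranspose_sub, Matrix.conjTranspose_one, Matrix.conjTranspose_smul,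
      hAdef, Matrix.conjTranspose_mul, Matrix.conjTranspose_conjTranspose]
    congr 1
    congr 1
    rw [hcdef]
    simp [← Complex.ofReal_inv]
  have hcP : (c • P).PosSemidef := by
    have key : c • P = ((Real.sqrt α : ℂ) • P)ᴴ * ((Real.sqrt α : ℂ) • P) := by
      rw [Matrix.conjTranspose_smul, hPH, Matrix.smul_mul, Matrix.mul_smul, smul_smul, hPP]
      congr 1
      rw [hcdef]
      have : (starRingEnd ℂ) ((Real.sqrt α : ℝ) : ℂ) = ((Real.sqrt α : ℝ) : ℂ) :=
        Complex.conj_ofReal _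
      rw [RCLike.star_def, this, ← Complex.ofReal_mul, Real.mul_self_sqrt hα0]
    rw [key]
    exact Matrix.posSemidef_conjTranspose_mul_self _
  have hPSD1 : (c • (1 : Matrix (Fin n) (Fin n) ℂ) - A).PosSemidef := by
    have : c • (1 : Matrix (Fin n) (Fin n) ℂ) - A = c • P := by
      rw [hPdef, smul_sub, smul_smul, mul_inv_cancel₀ hcne, one_smul]
    rw [this]
    exact hcP
  -- PSD of c•R - φφᴴ
  have hTinv2 : T⁻¹ * T⁻¹ = R := by
    rw [← Matrix.mul_inv_rev, hTsq, hSdef, Matrix.nonsing_inv_nonsing_inv R hRdetu]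
  have hTψ : T⁻¹ * ψ = φ := by rw [hψdef, ← Matrix.mul_assoc, hTT', Matrix.one_mul]
  have hψT : ψᴴ * T⁻¹ = φᴴ := by
    rw [hψdef, Matrix.conjTranspose_mul, hTH, Matrix.mul_assoc, hTT, Matrix.mul_one]
  have hA' : T⁻¹ * A * T⁻¹ = φ * φᴴ := by
    calc T⁻¹ * A * T⁻¹ = (T⁻¹ * ψ) * (ψᴴ * T⁻¹) := by
          rw [hAdef]; simp only [Matrix.mul_assoc]
      _ = φ * φᴴ := by rw [hTψ, hψT]
  have hPSD2 : (c • R - φ * φᴴ).PosSemidef := by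
    have h1 := hPSD1.mul_mul_conjTranspose_same T⁻¹
    have key : T⁻¹ * (c • (1 : Matrix (Fin n) (Fin n) ℂ) - A) * (T⁻¹)ᴴ = c • R - φ * φᴴ := by
      rw [hTinvH, Matrix.mul_sub, Matrix.sub_mul, Matrix.mul_smul, Matrix.mul_one,
        Matrix.smul_mul, hTinv2, hA']
    rwa [key] at h1
  have hPSDi : ∀ i, (c • R - ρ i).PosSemidef := by
    intro i
    have h1 := hPSD2.mul_mul_conjTranspose_same (U i)
    have key : U i * (c • R - φ * φᴴ) * (U i)ᴴ = c • R - ρ i := by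
      rw [Matrix.mul_sub, Matrix.sub_mul, Matrix.mul_smul, Matrix.smul_mul, hURU i, hρdef i]
    rwa [key] at h1
  -- the sum identity
  have hWS : W * S = R := by rw [← hRsq, Matrix.mul_assoc, hRS, Matrix.mul_one]
  have hμconj : μᴴ = φᴴ * S := by rw [hμ, Matrix.conjTranspose_mul, hSH]
  have hmid : (φ * φᴴ) * (μ * μᴴ) = c • ((φ * φᴴ) * S) := by
    calc (φ * φᴴ) * (μ * μᴴ) = φ * (φᴴ * S * φ) * (φᴴ * S) := by
          rw [hμconj, hμ]; simp only [Matrix.mul_assoc]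
      _ = c • ((φ * φᴴ) * S) := by
          rw [hα, Matrix.mul_smul, Matrix.mul_one, Matrix.smul_mul]
          simp only [Matrix.mul_assoc]
  have hterm : ∀ i, ρ i * (U i * (μ * μᴴ) * (U i)ᴴ)
      = c • (U i * (φ * φᴴ) * (U i)ᴴ * S) := by
    intro i
    have hcancel : ∀ (X : Matrix (Fin n) (Fin n) ℂ), (U i)ᴴ * (U i * X) = X := by
      intro X; rw [← Matrix.mul_assoc, hU1 i, Matrix.one_mul]
    calc ρ i * (U i * (μ * μᴴ) * (U i)ᴴ)
        = U i * ((φ * φᴴ) * ((U i)ᴴ * (U i * ((μ * μᴴ) * (U i)ᴴ)))) := by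
          rw [hρdef i]; simp only [Matrix.mul_assoc]
      _ = U i * ((φ * φᴴ) * (μ * μᴴ) * (U i)ᴴ) := by
          rw [hcancel]; simp only [Matrix.mul_assoc]
      _ = c • (U i * ((φ * φᴴ) * (S * (U i)ᴴ))) := by
          simp only [hmid, Matrix.smul_mul, Matrix.mul_smul, Matrix.mul_assoc]
      _ = c • (U i * (φ * φᴴ) * (U i)ᴴ * S) := by
          rw [hSUc i]; simp only [Matrix.mul_assoc]
  have hsum : ∑ i, ρ i * (U i * (μ * μᴴ) * (U i)ᴴ) = c • R := by
    calc ∑ i, ρ i * (U i * (μ * μᴴ) * (U i)ᴴ)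
        = ∑ i, c • (U i * (φ * φᴴ) * (U i)ᴴ * S) := Finset.sum_congr rfl fun i _ => hterm i
      _ = c • ((∑ i, U i * (φ * φᴴ) * (U i)ᴴ) * S) := by
          rw [← Finset.smul_sum, ← Finset.sum_mul]
      _ = c • R := by rw [← hWdef, hWS]
  -- final inequality
  intro Pm hPmPSD hPmSum
  have hbound : ∀ i, ((ρ i * Pm i).trace).re ≤ (((c • R) * Pm i).trace).re := by
    intro i
    have h1 : (((c • R) - ρ i) * Pm i).trace.re
        = (((c • R) * Pm i).trace).re - ((ρ i * Pm i).trace).re := by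
      rw [Matrix.sub_mul, Matrix.trace_sub, Complex.sub_re]
    have h2 := aux_trace_mul_re_nonneg (hPSDi i) (hPmPSD i)
    rw [h1] at h2
    linarith
  have hmnn : (0:ℝ) ≤ 1 / (m:ℝ) := by positivity
  have hRHS : ∑ i, (1 / (m:ℝ)) * ((ρ i * (U i * (μ * μᴴ) * (U i)ᴴ)).trace).re
      = (1 / (m:ℝ)) * ((c • R).trace).re := by
    rw [← Finset.mul_sum, ← Complex.re_sum, ← Matrix.trace_sum, hsum]
  rw [hRHS]
  calc ∑ i, (1 / (m:ℝ)) * ((ρ i * Pm i).trace).re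
      ≤ ∑ i, (1 / (m:ℝ)) * (((c • R) * Pm i).trace).re :=
        Finset.sum_le_sum fun i _ => mul_le_mul_of_nonneg_left (hbound i) hmnn
    _ = (1 / (m:ℝ)) * (((c • R) * ∑ i, Pm i).trace).re := by
        rw [Finset.mul_sum Finset.univ Pm (c • R), Matrix.trace_sum, Complex.re_sum,
          Finset.mul_sum]
    _ = (1 / (m:ℝ)) * ((c • R).trace).re := by rw [hPmSum, Matrix.mul_one]
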